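/- Let N ≥ 2, α ∈ (0,1), λ > 0, and k ∈ ℕ^{N-1}. Define e_k : ℝ^{N-1} → ℝ by e_k(s) = ∏_{i=1}^{N-1} cos(k_i s_i). Then for every s ∈ ℝ^{N-1}, ∫_{ℝ^{N-1}} e_k(s−t) (|t|² + 4λ²)^{−(N+α)/2} dt = e_k(s) · ∫_{ℝ^{N-1}} e_k(t) (|t|² + 4λ²)^{−(N+α)/2} dt, both integrals being absolutely convergent. -/

import Mathlib

/-! Since `cos (a - b) = cos a cos b + sin a sin b`, expanding the product `e_k(s - t)` coordinate
by coordinate writes it as a sum, over the choices of `cos` or `sin` in each coordinate, of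
(a function of `s`) times (a function of `t`). The weight depends on `t` only through `|t|`, so it
is invariant under the reflection `tⱼ ↦ -tⱼ`, whereas a term with a sine in coordinate `j` is odd
under it and integrates to zero. Only the all-cosine term `e_k(s) e_k(t)` survives. -/

open MeasureTheory Real Filter Topology

noncomputable section

abbrev ES (m : ℕ) : Type := EuclideanSpace ℝ (Fin (m + 1))

/-- `e_k(s) = ∏ᵢ cos(kᵢ sᵢ)`. -/
def ek {m : ℕ} (k : Fin (m + 1) → ℕ) (s : ES m) : ℝ :=
  ∏ i, Real.cos ((k i : ℝ) * s i)

open Finset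

lemma integrable_rpow_neg_norm_sq_add {E : Type*} [NormedAddCommGroup E] [NormedSpace ℝ E]
    [FiniteDimensional ℝ E] [MeasurableSpace E] [BorelSpace E] {μ : Measure E}
    [μ.IsAddHaarMeasure] {c p : ℝ} (hc : 0 < c) (hp : (Module.finrank ℝ E : ℝ) < 2 * p) :
    Integrable (fun t : E => (‖t‖ ^ 2 + c) ^ (-p)) μ := by
  have hp0 : 0 ≤ p := by linarith [(Module.finrank ℝ E).cast_nonneg (α := ℝ)]
  have hc' : 0 < min 1 c := lt_min one_pos hc
  have hdom := (integrable_rpow_neg_one_add_norm_sq (μ := μ) hp).const_mul (min 1 c ^ (-p))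
  rw [show -(2 * p) / 2 = -p by ring] at hdom
  have hmeas : Measurable fun t : E => (‖t‖ ^ 2 + c) ^ (-p) := by fun_prop
  refine hdom.mono' hmeas.aestronglyMeasurable (Eventually.of_forall fun t => ?_)
  have hle : min 1 c * (1 + ‖t‖ ^ 2) ≤ ‖t‖ ^ 2 + c := by
    nlinarith [min_le_left 1 c, min_le_right 1 c, sq_nonneg ‖t‖]
  rw [norm_of_nonneg (by positivity), ← mul_rpow hc'.le (by positivity)]
  exact rpow_le_rpow_of_nonpos (by positivity) hle (by linarith)

def cosOrSin : Bool → ℝ → ℝ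
  | true => cos
  | false => sin

lemma cos_sub_eq_sum_cosOrSin (x y : ℝ) : cos (x - y) = ∑ b, cosOrSin b x * cosOrSin b y := by
  simp [cosOrSin, cos_sub]

lemma continuous_cosOrSin (b : Bool) : Continuous (cosOrSin b) := by
  cases b
  exacts [continuous_sin, continuous_cos]

lemma abs_cosOrSin_le_one (b : Bool) (x : ℝ) : |cosOrSin b x| ≤ 1 := by
  cases b
  exacts [abs_sin_le_one x, abs_cos_le_one x]

namespace EuclideanSpace

variable {ι : Type*} [Fintype ι]

lemma integrable_prod_coord_mul {μ : Measure (EuclideanSpace ℝ ι)} {w : EuclideanSpace ℝ ι → ℝ}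
    (hw : Integrable w μ) {f : ι → ℝ → ℝ} (hf : ∀ i, Continuous (f i))
    (hf_le : ∀ i x, |f i x| ≤ 1) :
    Integrable (fun t => (∏ i, f i (t i)) * w t) μ := by
  refine hw.bdd_mul (c := 1) (Continuous.aestronglyMeasurable (by fun_prop))
    (Eventually.of_forall fun t => ?_)
  rw [norm_prod]
  exact prod_le_one (fun i _ => norm_nonneg _) fun i _ => hf_le i _

variable [DecidableEq ι]

def reflectCoord (j : ι) : EuclideanSpace ℝ ι ≃ₗᵢ[ℝ] EuclideanSpace ℝ ι :=
  LinearIsometryEquiv.piLpCongrRight 2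
    fun i => if i = j then LinearIsometryEquiv.neg ℝ else LinearIsometryEquiv.refl ℝ ℝ

lemma reflectCoord_apply (j i : ι) (t : EuclideanSpace ℝ ι) :
    reflectCoord j t i = if i = j then -t i else t i := by
  by_cases h : i = j <;> simp [reflectCoord, h]

lemma prod_reflectCoord (f : ι → ℝ → ℝ) (j : ι) (t : EuclideanSpace ℝ ι) :
    ∏ i, f i (reflectCoord j t i) = f j (-t j) * ∏ i ∈ univ.erase j, f i (t i) := by
  rw [← mul_prod_erase univ _ (mem_univ j), reflectCoord_apply, if_pos rfl]
  congr 1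
  exact prod_congr rfl fun i hi => by rw [reflectCoord_apply, if_neg (ne_of_mem_erase hi)]

lemma integral_eq_zero_of_reflectCoord_odd {F : Type*} [NormedAddCommGroup F] [NormedSpace ℝ F]
    {g : EuclideanSpace ℝ ι → F} (j : ι) (hg : ∀ t, g (reflectCoord j t) = -g t) :
    ∫ t, g t = 0 := by
  have h := integral_comp (reflectCoord j) g
  simp only [hg, integral_neg] at h
  have h2 : (2 : ℝ) • ∫ t, g t = 0 := by rw [two_smul]; nth_rw 1 [← h]; exact neg_add_cancel _
  exact (smul_eq_zero.mp h2).resolve_left two_ne_zero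

theorem integral_prod_cos_sub_mul {w : EuclideanSpace ℝ ι → ℝ} (hw : Integrable w)
    (hw_refl : ∀ j t, w (reflectCoord j t) = w t) (κ : ι → ℝ) (s : EuclideanSpace ℝ ι) :
    ∫ t, (∏ i, cos (κ i * (s i - t i))) * w t
      = (∏ i, cos (κ i * s i)) * ∫ t, (∏ i, cos (κ i * t i)) * w t := by
  have hexpand : ∀ t : EuclideanSpace ℝ ι, (∏ i, cos (κ i * (s i - t i))) * w t
      = ∑ ε : ι → Bool, (∏ i, cosOrSin (ε i) (κ i * s i)) *
          ((∏ i, cosOrSin (ε i) (κ i * t i)) * w t) := fun t => by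
    simp_rw [mul_sub, cos_sub_eq_sum_cosOrSin, Fintype.prod_sum, sum_mul, prod_mul_distrib,
      mul_assoc]
  have hodd : ∀ ε ≠ fun _ => true, ∫ t, (∏ i, cosOrSin (ε i) (κ i * t i)) * w t = 0 := by
    intro ε hε
    obtain ⟨j, hj⟩ : ∃ j, ε j = false := by
      by_contra! h
      exact hε (funext fun i => by simpa using h i)
    refine integral_eq_zero_of_reflectCoord_odd j fun t => ?_
    rw [hw_refl, prod_reflectCoord (fun i x => cosOrSin (ε i) (κ i * x)),
      ← mul_prod_erase univ _ (mem_univ j), hj]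
    simp only [cosOrSin, mul_neg, sin_neg]
    ring
  have hint : ∀ ε : ι → Bool, Integrable fun t => (∏ i, cosOrSin (ε i) (κ i * t i)) * w t :=
    fun ε => integrable_prod_coord_mul hw (fun i => (continuous_cosOrSin _).comp
      (continuous_const_mul _)) fun i x => abs_cosOrSin_le_one _ _
  simp_rw [hexpand]
  rw [integral_finsetSum _ fun ε _ => (hint ε).const_mul _,
    sum_eq_single (fun _ => true) (fun ε _ hε => by rw [integral_const_mul, hodd ε hε, mul_zero])
      (by simp)]
  simp only [cosOrSin, integral_const_mul]

end EuclideanSpace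

theorem statement_4 (m : ℕ) (α lam : ℝ) (hα : α ∈ Set.Ioo (0 : ℝ) 1) (hlam : 0 < lam)
    (k : Fin (m + 1) → ℕ) (s : ES m) :
    Integrable (fun t : ES m =>
        ek k (s - t) * (‖t‖ ^ 2 + 4 * lam ^ 2) ^ (-(((m : ℝ) + 2 + α) / 2))) ∧
      Integrable (fun t : ES m =>
        ek k t * (‖t‖ ^ 2 + 4 * lam ^ 2) ^ (-(((m : ℝ) + 2 + α) / 2))) ∧
      ∫ t : ES m, ek k (s - t) * (‖t‖ ^ 2 + 4 * lam ^ 2) ^ (-(((m : ℝ) + 2 + α) / 2))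
        = ek k s * ∫ t : ES m, ek k t * (‖t‖ ^ 2 + 4 * lam ^ 2) ^ (-(((m : ℝ) + 2 + α) / 2)) := by
  set w : ES m → ℝ := fun t => (‖t‖ ^ 2 + 4 * lam ^ 2) ^ (-(((m : ℝ) + 2 + α) / 2))
  have hw : Integrable w := integrable_rpow_neg_norm_sq_add (by positivity) (by
    rw [finrank_euclideanSpace_fin]; push_cast; linarith [hα.1])
  refine ⟨EuclideanSpace.integrable_prod_coord_mul (f := fun i x => cos (k i * (s i - x))) hw
      (fun i => by fun_prop) fun i x => abs_cos_le_one _,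
    EuclideanSpace.integrable_prod_coord_mul (f := fun i x => cos (k i * x)) hw
      (fun i => by fun_prop) fun i x => abs_cos_le_one _, ?_⟩
  exact EuclideanSpace.integral_prod_cos_sub_mul hw
    (fun j t => by simp only [w, LinearIsometryEquiv.norm_map]) _ s
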